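/- For the least-squares loss L(r) = ½‖P_o v(r) - y‖², the gradient with respect to r equals diag(i) (I - Ω_{A/R}ᵀ) P_oᵀ (P_o v - y), where v = -Ω_{A/R} s and i = R⁻¹ v. -/

import Mathlib

open Matrix

noncomputable def OmMat {C E : ℕ} (A : Matrix (Fin C) (Fin E) ℝ) (r : Fin E → ℝ) :
    Matrix (Fin E) (Fin E) ℝ :=
  Matrix.diagonal r * Aᵀ * (A * Matrix.diagonal r * Aᵀ)⁻¹ * A

noncomputable def vMap {C E : ℕ} (A : Matrix (Fin C) (Fin E) ℝ) (r : Fin E → ℝ)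
    (s : Fin E → ℝ) : Fin E → ℝ :=
  -(OmMat A r *ᵥ s)

noncomputable def iMap {C E : ℕ} (A : Matrix (Fin C) (Fin E) ℝ) (r : Fin E → ℝ)
    (s : Fin E → ℝ) : Fin E → ℝ :=
  (Matrix.diagonal r)⁻¹ *ᵥ vMap A r s

noncomputable def lsLoss {C E t : ℕ} (A : Matrix (Fin C) (Fin E) ℝ)
    (Po : Matrix (Fin t) (Fin E) ℝ) (y : Fin t → ℝ) (s : Fin E → ℝ)
    (r : Fin E → ℝ) : ℝ :=
  (1 / 2) * ∑ j, (Po *ᵥ vMap A r s - y) j ^ 2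

/-!
Perturbing the single coordinate `r b` perturbs `R` by `E_bb = single b b 1` and `A R Aᵀ` by
`A E_bb Aᵀ`, so with `T = Aᵀ (A R Aᵀ)⁻¹ A` (thus `Ω = R T` and `i = -T s`) the rule
`d(M⁻¹) = -M⁻¹ dM M⁻¹` gives `dΩ = E_bb T - R T E_bb T = (1 - Ω) E_bb T`, hence
`dv = (1 - Ω) E_bb i = i_b (1 - Ω) e_b`. The chain rule for `½‖P_o v - y‖²` then yields
`i_b ((1 - Ω)ᵀ P_oᵀ (P_o v - y))_b`.
`A R Aᵀ` is invertible because it is positive definite: `R` is, and `A` has independent rows.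
-/

theorem Matrix.isUnit_mul_diagonal_mul_transpose {m n : Type*} [Fintype m] [Fintype n]
    [DecidableEq m] [DecidableEq n] {A : Matrix m n ℝ} (hA : A.rank = Fintype.card m)
    {d : n → ℝ} (hd : ∀ i, 0 < d i) : IsUnit (A * diagonal d * Aᵀ) := by
  have hrows : LinearIndependent ℝ A.row := linearIndependent_iff_card_eq_finrank_span.mpr <| by
    rw [Set.finrank, ← rank_eq_finrank_span_row, hA]
  exact ((PosDef.diagonal hd).mul_mul_conjTranspose_same (vecMul_injective_iff.mpr hrows)).isUnit

theorem omMat_eq_diagonal_mul {C E : ℕ} (A : Matrix (Fin C) (Fin E) ℝ) (r : Fin E → ℝ) :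
    OmMat A r = diagonal r * (Aᵀ * (A * diagonal r * Aᵀ)⁻¹ * A) := by
  simp only [OmMat, Matrix.mul_assoc]

theorem iMap_eq_neg_mulVec {C E : ℕ} (A : Matrix (Fin C) (Fin E) ℝ) (r s : Fin E → ℝ)
    (hr : ∀ e, r e ≠ 0) : iMap A r s = -((Aᵀ * (A * diagonal r * Aᵀ)⁻¹ * A) *ᵥ s) := by
  have hR : IsUnit (diagonal r).det := by simpa [det_diagonal, Finset.prod_ne_zero_iff] using hr
  rw [iMap, vMap, omMat_eq_diagonal_mul, mulVec_neg, mulVec_mulVec, ← Matrix.mul_assoc,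
    nonsing_inv_mul _ hR, Matrix.one_mul]

section MatrixDerivatives

variable {x : ℝ}

theorem HasDerivAt.linearMap_comp {F G : Type*} [NormedAddCommGroup F] [NormedSpace ℝ F]
    [FiniteDimensional ℝ F] [NormedAddCommGroup G] [NormedSpace ℝ G] {f : ℝ → F} {f' : F}
    (L : F →ₗ[ℝ] G) (hf : HasDerivAt f f' x) : HasDerivAt (fun u => L (f u)) (L f') x :=
  L.toContinuousLinearMap.hasFDerivAt.comp_hasDerivAt x hf

theorem HasDerivAt.half_sum_sq {ι : Type*} [Fintype ι] {w : ℝ → ι → ℝ} {w' : ι → ℝ}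
    (hw : HasDerivAt w w' x) : HasDerivAt (fun u => 1 / 2 * ∑ j, w u j ^ 2) (w x ⬝ᵥ w') x := by
  have hsq := HasDerivAt.fun_sum fun j (_ : j ∈ Finset.univ) => (hasDerivAt_pi.mp hw j).pow 2
  refine (hsq.const_mul (1 / 2 : ℝ)).congr_deriv ?_
  simp only [dotProduct, Finset.mul_sum]
  refine Finset.sum_congr rfl fun j _ => ?_
  push_cast
  ring

-- Matrices carry no global norm. All norms give the same derivatives; the ℓ∞ operator norm is one
-- that makes square matrices a normed algebra, as `hasFDerivAt_ringInverse` needs.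
attribute [local instance] Matrix.linftyOpNormedAddCommGroup Matrix.linftyOpNormedSpace
  Matrix.linftyOpNormedRing Matrix.linftyOpNormedAlgebra

variable {l m n o : Type*} [Fintype l] [Fintype m] [Fintype n] [Fintype o]

theorem HasDerivAt.matrix_mul_mul {f : ℝ → Matrix m n ℝ} {f' : Matrix m n ℝ}
    (B : Matrix l m ℝ) (C : Matrix n o ℝ) (hf : HasDerivAt f f' x) :
    HasDerivAt (fun u => B * f u * C) (B * f' * C) x :=
  (hf.linearMap_comp (mulLeftLinearMap n ℝ B)).linearMap_comp (mulRightLinearMap l ℝ C)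

theorem HasDerivAt.matrix_inv [DecidableEq n] {f : ℝ → Matrix n n ℝ} {f' : Matrix n n ℝ}
    (hf : HasDerivAt f f' x) (hfx : IsUnit (f x)) :
    HasDerivAt (fun u => (f u)⁻¹) (-((f x)⁻¹ * f' * (f x)⁻¹)) x := by
  obtain ⟨U, hU⟩ := hfx
  have hinv := hasFDerivAt_ringInverse (𝕜 := ℝ) U
  rw [hU] at hinv
  simp_rw [nonsing_inv_eq_ringInverse]
  refine (hinv.comp_hasDerivAt x hf).congr_deriv ?_
  simp [← hU]

theorem Matrix.hasDerivAt_diagonal_update [DecidableEq n] (d : n → ℝ) (b : n) :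
    HasDerivAt (fun u => diagonal (Function.update d b u)) (single b b 1) (d b) := by
  rw [← diagonal_single]
  exact (hasDerivAt_update d b (d b)).linearMap_comp (diagonalLinearMap n ℝ ℝ)

variable {C E : ℕ} (A : Matrix (Fin C) (Fin E) ℝ) (r s : Fin E → ℝ)

theorem hasDerivAt_omMat_update (b : Fin E) (hM : IsUnit (A * diagonal r * Aᵀ)) :
    HasDerivAt (fun u => OmMat A (Function.update r b u))
      ((1 - OmMat A r) * single b b 1 * (Aᵀ * (A * diagonal r * Aᵀ)⁻¹ * A)) (r b) := by
  have hD := hasDerivAt_diagonal_update r b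
  have hMinv := (hD.matrix_mul_mul A Aᵀ).matrix_inv (by rwa [Function.update_eq_self])
  have hT := hMinv.matrix_mul_mul Aᵀ A
  simp only [omMat_eq_diagonal_mul]
  refine (hD.fun_mul hT).congr_deriv ?_
  simp only [Function.update_eq_self, sub_mul, Matrix.one_mul, Matrix.mul_neg, Matrix.neg_mul,
    Matrix.mul_assoc]
  abel

theorem hasDerivAt_vMap_update (b : Fin E) (hM : IsUnit (A * diagonal r * Aᵀ))
    (hr : ∀ e, r e ≠ 0) :
    HasDerivAt (fun u => vMap A (Function.update r b u) s)
      ((1 - OmMat A r) *ᵥ Pi.single b (iMap A r s b)) (r b) := by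
  have h := ((hasDerivAt_omMat_update A r b hM).linearMap_comp ((mulVecBilin ℝ ℝ).flip s)).neg
  refine h.congr_deriv ?_
  simp only [LinearMap.flip_apply, mulVecBilin_apply, iMap_eq_neg_mulVec A r s hr,
    ← mulVec_mulVec, ← mulVec_neg, single_mulVec, one_mul, Pi.neg_apply, Pi.single_neg]
  rfl

end MatrixDerivatives

theorem gradient_of_least_squares_loss
    (C E t : ℕ) (A : Matrix (Fin C) (Fin E) ℝ) (r : Fin E → ℝ) (s : Fin E → ℝ)
    (Po : Matrix (Fin t) (Fin E) ℝ) (y : Fin t → ℝ)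
    (hA : A.rank = C) (hr : ∀ e, 0 < r e) :
    ∀ b : Fin E,
      HasDerivAt (fun u : ℝ => lsLoss A Po y s (Function.update r b u))
        ((Matrix.diagonal (iMap A r s) *ᵥ
          ((1 - (OmMat A r)ᵀ) *ᵥ (Poᵀ *ᵥ (Po *ᵥ vMap A r s - y)))) b) (r b) := by
  intro b
  have hM := isUnit_mul_diagonal_mul_transpose (A := A) (by rwa [Fintype.card_fin]) hr
  have hv := hasDerivAt_vMap_update A r s b hM fun e => (hr e).ne'
  have hL := ((hv.linearMap_comp Po.mulVecLin).sub_const y).half_sum_sq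
  rw [Function.update_eq_self] at hL
  refine hL.congr_deriv ?_
  have hΩ : 1 - (OmMat A r)ᵀ = (1 - OmMat A r)ᵀ := by rw [transpose_sub, transpose_one]
  simp only [mulVecLin_apply]
  rw [hΩ, mulVec_transpose, mulVec_transpose, mulVec_diagonal, dotProduct_mulVec,
    dotProduct_mulVec, dotProduct_single, mul_comm]
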